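/- Let (G, F) be a Gaussian sheaf with orthogonal restriction maps over a connected graph where transport is path-independent (the transport map P^γ_{v→u} depends only on the endpoints v, u, not on the path γ). Then the space of global sections H⁰(G, F) is in bijection with the space G(ℝ^d) ≅ ℝ^d × S₊^d of Gaussian distributions on ℝ^d; concretely, for any fixed vertex k the evaluation map ν ↦ ν_k is a bijection from the global sections to ℝ^d × S₊^d. -/

import Mathlib

open Matrix

variable {V E : Type*} {d : ℕ}

/-- One transport step across an edge `e` from `w` to `u` (recorded as `(e, w, u)`):
`(μ,Σ) ↦ (F_{u◁e}ᵀ F_{w◁e} μ, F_{u◁e}ᵀ F_{w◁e} Σ F_{w◁e}ᵀ F_{u◁e})`. -/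
def transportStep (F : E → V → Matrix (Fin d) (Fin d) ℝ) (s : E × V × V)
    (p : (Fin d → ℝ) × Matrix (Fin d) (Fin d) ℝ) :
    (Fin d → ℝ) × Matrix (Fin d) (Fin d) ℝ :=
  ((((F s.1 s.2.2)ᵀ * F s.1 s.2.1)).mulVec p.1,
    ((F s.1 s.2.2)ᵀ * F s.1 s.2.1) * p.2 * ((F s.1 s.2.2)ᵀ * F s.1 s.2.1)ᵀ)

/-- Transport along a path, composing the edge transport maps. -/
def transport (F : E → V → Matrix (Fin d) (Fin d) ℝ) (γ : List (E × V × V))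
    (p : (Fin d → ℝ) × Matrix (Fin d) (Fin d) ℝ) :
    (Fin d → ℝ) × Matrix (Fin d) (Fin d) ℝ :=
  γ.foldl (fun q s => transportStep F s q) p

/-- `IsWalk a b v γ u`: the list of steps `γ` is a walk from `v` to `u` in the
graph with edge-endpoint maps `a`, `b`. -/
def IsWalk (a b : E → V) : V → List (E × V × V) → V → Prop
  | v, [], u => v = u
  | v, s :: rest, u =>
      s.2.1 = v ∧ ((a s.1 = s.2.1 ∧ b s.1 = s.2.2) ∨ (a s.1 = s.2.2 ∧ b s.1 = s.2.1)) ∧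
        IsWalk a b s.2.2 rest u

/-! Across an edge `(e, w, u)` transport is multiplication by `F_{u◁e}ᵀ F_{w◁e}`. Since `F_{u◁e}` is
orthogonal, edge compatibility of `(p, q)` says exactly that `q` is the transport of `p`. Hence a
global section is transported along every walk, so it is determined by its value at `k`; and by path
independence, transporting any `p` from `k` to each vertex gives a global section with value `p` at
`k`, positive semidefinite because each step is a congruence. -/

lemma transportStep_eq_of_compatible {F : E → V → Matrix (Fin d) (Fin d) ℝ} {e : E} {w u : V}
    (hu : (F e u)ᵀ * F e u = 1) {p q : (Fin d → ℝ) × Matrix (Fin d) (Fin d) ℝ}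
    (hmean : F e w *ᵥ p.1 = F e u *ᵥ q.1)
    (hcov : F e w * p.2 * (F e w)ᵀ = F e u * q.2 * (F e u)ᵀ) :
    transportStep F (e, w, u) p = q := by
  refine Prod.ext ?_ ?_
  · change ((F e u)ᵀ * F e w) *ᵥ p.1 = q.1
    rw [← mulVec_mulVec, hmean, mulVec_mulVec, hu, one_mulVec]
  · calc ((F e u)ᵀ * F e w) * p.2 * ((F e u)ᵀ * F e w)ᵀ
        = (F e u)ᵀ * (F e w * p.2 * (F e w)ᵀ) * F e u := by
          simp only [transpose_mul, transpose_transpose, Matrix.mul_assoc]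
      _ = ((F e u)ᵀ * F e u) * q.2 * ((F e u)ᵀ * F e u) := by
          rw [hcov]; simp only [Matrix.mul_assoc]
      _ = q.2 := by rw [hu, Matrix.one_mul, Matrix.mul_one]

lemma compatible_transportStep {F : E → V → Matrix (Fin d) (Fin d) ℝ} {e : E} {w u : V}
    (hu : (F e u)ᵀ * F e u = 1) (p : (Fin d → ℝ) × Matrix (Fin d) (Fin d) ℝ) :
    F e w *ᵥ p.1 = F e u *ᵥ (transportStep F (e, w, u) p).1 ∧
      F e w * p.2 * (F e w)ᵀ
        = F e u * (transportStep F (e, w, u) p).2 * (F e u)ᵀ := by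
  have hu' : F e u * (F e u)ᵀ = 1 := mul_eq_one_comm.mp hu
  constructor
  · change _ = F e u *ᵥ (((F e u)ᵀ * F e w) *ᵥ p.1)
    rw [mulVec_mulVec, ← Matrix.mul_assoc, hu', Matrix.one_mul]
  · change _ = F e u * (((F e u)ᵀ * F e w) * p.2 * ((F e u)ᵀ * F e w)ᵀ) * (F e u)ᵀ
    simp only [transpose_mul, transpose_transpose, ← Matrix.mul_assoc, hu', Matrix.one_mul]
    simp only [Matrix.mul_assoc, hu', Matrix.mul_one]

lemma transport_snd_posSemidef (F : E → V → Matrix (Fin d) (Fin d) ℝ) (γ : List (E × V × V))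
    {p : (Fin d → ℝ) × Matrix (Fin d) (Fin d) ℝ} (hp : p.2.PosSemidef) :
    (transport F γ p).2.PosSemidef := by
  induction γ generalizing p with
  | nil => exact hp
  | cons s γ ih =>
      apply ih
      simpa [transportStep] using hp.mul_mul_conjTranspose_same ((F s.1 s.2.2)ᵀ * F s.1 s.2.1)

lemma transport_append (F : E → V → Matrix (Fin d) (Fin d) ℝ) (γ₁ γ₂ : List (E × V × V))
    (p : (Fin d → ℝ) × Matrix (Fin d) (Fin d) ℝ) :
    transport F (γ₁ ++ γ₂) p = transport F γ₂ (transport F γ₁ p) :=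
  List.foldl_append

lemma IsWalk.append {a b : E → V} {v u x : V} {γ₁ γ₂ : List (E × V × V)}
    (h₁ : IsWalk a b v γ₁ u) (h₂ : IsWalk a b u γ₂ x) : IsWalk a b v (γ₁ ++ γ₂) x := by
  induction γ₁ generalizing v with
  | nil => cases h₁; exact h₂
  | cons s γ ih => exact ⟨h₁.1, h₁.2.1, ih h₁.2.2⟩

lemma IsWalk.concat_edge {a b : E → V} {v : V} {γ : List (E × V × V)} {e : E}
    (h : IsWalk a b v γ (a e)) : IsWalk a b v (γ ++ [(e, a e, b e)]) (b e) :=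
  h.append ⟨rfl, Or.inl ⟨rfl, rfl⟩, rfl⟩

lemma transport_eq_of_isWalk {a b : E → V} {F : E → V → Matrix (Fin d) (Fin d) ℝ}
    {s : V → (Fin d → ℝ) × Matrix (Fin d) (Fin d) ℝ} (horth : ∀ e v, (F e v)ᵀ * F e v = 1)
    (hmean : ∀ e, F e (a e) *ᵥ (s (a e)).1 = F e (b e) *ᵥ (s (b e)).1)
    (hcov : ∀ e, F e (a e) * (s (a e)).2 * (F e (a e))ᵀ = F e (b e) * (s (b e)).2 * (F e (b e))ᵀ)
    {v u : V} {γ : List (E × V × V)} (hγ : IsWalk a b v γ u) :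
    transport F γ (s v) = s u := by
  induction γ generalizing v with
  | nil => cases hγ; rfl
  | cons st γ ih =>
      obtain ⟨e, w, x⟩ := st
      obtain ⟨rfl, hor, hγ⟩ := hγ
      dsimp only at hor hγ
      have hstep : transportStep F (e, w, x) (s w) = s x := by
        rcases hor with ⟨rfl, rfl⟩ | ⟨rfl, rfl⟩
        · exact transportStep_eq_of_compatible (horth _ _) (hmean e) (hcov e)
        · exact transportStep_eq_of_compatible (horth _ _) (hmean e).symm (hcov e).symm
      exact (congrArg (transport F γ) hstep).trans (ih hγ)

/-- For a Gaussian sheaf with orthogonal restriction maps over a connected graph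
with path-independent transport, evaluation at any fixed vertex `k` is a
bijection between the space of global sections `H⁰(G,F)` and the space
`ℝ^d × S₊^d` of Gaussian distributions on `ℝ^d`. -/
theorem sections_biject_gaussians (a b : E → V)
    (F : E → V → Matrix (Fin d) (Fin d) ℝ)
    (horth : ∀ e v, (F e v)ᵀ * F e v = 1)
    (hconn : ∀ v u : V, ∃ γ : List (E × V × V), IsWalk a b v γ u)
    (hpathindep : ∀ (v u : V) (γ₁ γ₂ : List (E × V × V)),
      IsWalk a b v γ₁ u → IsWalk a b v γ₂ u →
      ∀ p : (Fin d → ℝ) × Matrix (Fin d) (Fin d) ℝ,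
        transport F γ₁ p = transport F γ₂ p)
    (k : V) :
    Function.Bijective
      (fun s : {s : V → (Fin d → ℝ) × Matrix (Fin d) (Fin d) ℝ //
          (∀ w, (s w).2.PosSemidef) ∧
          (∀ e, (F e (a e)).mulVec ((s (a e)).1) = (F e (b e)).mulVec ((s (b e)).1)) ∧
          (∀ e, F e (a e) * (s (a e)).2 * (F e (a e))ᵀ
              = F e (b e) * (s (b e)).2 * (F e (b e))ᵀ)} =>
        (⟨((s.1 k).1, (s.1 k).2), s.2.1 k⟩ :
          {p : (Fin d → ℝ) × Matrix (Fin d) (Fin d) ℝ // p.2.PosSemidef})) := by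
  constructor
  · rintro ⟨s₁, _, hmean₁, hcov₁⟩ ⟨s₂, _, hmean₂, hcov₂⟩ h
    have hk : s₁ k = s₂ k := congrArg Subtype.val h
    refine Subtype.ext (funext fun w => ?_)
    obtain ⟨γ, hγ⟩ := hconn k w
    calc s₁ w = transport F γ (s₁ k) := (transport_eq_of_isWalk horth hmean₁ hcov₁ hγ).symm
      _ = transport F γ (s₂ k) := by rw [hk]
      _ = s₂ w := transport_eq_of_isWalk horth hmean₂ hcov₂ hγ
  · rintro ⟨p, hp⟩
    choose γ hγ using hconn k
    set g : V → (Fin d → ℝ) × Matrix (Fin d) (Fin d) ℝ := fun w => transport F (γ w) p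
    have hg_edge (e : E) : g (b e) = transportStep F (e, a e, b e) (g (a e)) := by
      rw [show g (b e) = transport F (γ (a e) ++ [(e, a e, b e)]) p from
        hpathindep k _ _ _ (hγ (b e)) (hγ (a e)).concat_edge p, transport_append]
      rfl
    have hg_k : g k = p := hpathindep k k _ [] (hγ k) rfl p
    refine ⟨⟨g, fun w => transport_snd_posSemidef F (γ w) hp,
      fun e => ?_, fun e => ?_⟩, Subtype.ext hg_k⟩
    · rw [hg_edge e]; exact (compatible_transportStep (horth e (b e)) _).1
    · rw [hg_edge e]; exact (compatible_transportStep (horth e (b e)) _).2
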